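/- Let M ≥ 1 and 0 ≤ K ≤ M. Let V be a real M×M orthogonal matrix, Λ an M×M diagonal matrix with nonnegative diagonal entries, W := Λ^{1/2} Vᵀ, L := V Λ Vᵀ, and U a real M×(M−K) matrix. Let (X, μ) be a probability space and let ε, s : X → ℝ^M be measurable and square-integrable, with J := E_μ[s sᵀ], and suppose W (E_μ[ε sᵀ]) U = W U. Let P be a real (M−K)×(M−K) matrix with Pᵀ = P and P (Uᵀ J U) P = P. Then E_μ[εᵀ L ε] ≥ Tr(L U P Uᵀ). -/

import Mathlib

open Matrix MeasureTheory

lemma dot_expand {M : ℕ} (A B : Matrix (Fin M) (Fin M) ℝ) (u v : Fin M → ℝ) :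
    (A *ᵥ u) ⬝ᵥ (B *ᵥ v) = ∑ i, ∑ j, (Aᵀ * B) i j * (u i * v j) := by
  have h : (A *ᵥ u) ⬝ᵥ (B *ᵥ v) = u ⬝ᵥ ((Aᵀ * B) *ᵥ v) := by
    rw [← Matrix.mulVec_mulVec, Matrix.dotProduct_mulVec u, Matrix.vecMul_transpose]
  rw [h]
  simp only [dotProduct, mulVec, dotProduct, Finset.mul_sum]
  exact Finset.sum_congr rfl fun i _ => Finset.sum_congr rfl fun j _ => by ring

lemma sum_eq_trace {M : ℕ} (A C : Matrix (Fin M) (Fin M) ℝ) :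
    ∑ i, ∑ j, A i j * C i j = (Aᵀ * C).trace := by
  simp only [Matrix.trace, Matrix.diag, Matrix.mul_apply, transpose_apply]
  rw [Finset.sum_comm]

lemma dotProduct_self_nonneg' {M : ℕ} (v : Fin M → ℝ) : 0 ≤ v ⬝ᵥ v :=
  Finset.sum_nonneg fun _ _ => mul_self_nonneg _

lemma memL2_mul_integrable {X : Type*} [MeasurableSpace X] {μ : Measure X} {f g : X → ℝ}
    (hf : MemLp f 2 μ) (hg : MemLp g 2 μ) : Integrable (fun x => f x * g x) μ := by
  have hpqr : (1 : ENNReal) / 1 = 1 / 2 + 1 / 2 := by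
    rw [ENNReal.div_add_div_same, div_one]
    norm_num
    exact (ENNReal.div_self two_ne_zero ENNReal.ofNat_ne_top).symm
  have h : MemLp (f • g) 1 μ := hg.smul hf (hpqr := ⟨by simpa only [one_div] using hpqr.symm⟩)
  rw [memLp_one_iff_integrable] at h
  exact h

lemma int_dot_integrable {M : ℕ} {X : Type*} [MeasurableSpace X] {μ : Measure X}
    (A B : Matrix (Fin M) (Fin M) ℝ) (f g : X → Fin M → ℝ)
    (hfg : ∀ i j, Integrable (fun x => f x i * g x j) μ) :
    Integrable (fun x => (A *ᵥ f x) ⬝ᵥ (B *ᵥ g x)) μ := by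
  simp_rw [dot_expand]
  exact integrable_finset_sum _ fun i _ =>
    integrable_finset_sum _ fun j _ => (hfg i j).const_mul _

lemma int_dot {M : ℕ} {X : Type*} [MeasurableSpace X] {μ : Measure X}
    (A B : Matrix (Fin M) (Fin M) ℝ) (f g : X → Fin M → ℝ)
    (hfg : ∀ i j, Integrable (fun x => f x i * g x j) μ) :
    ∫ x, (A *ᵥ f x) ⬝ᵥ (B *ᵥ g x) ∂μ
      = ((Aᵀ * B)ᵀ * (Matrix.of fun i j => ∫ x, f x i * g x j ∂μ)).trace := by
  simp_rw [dot_expand]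
  rw [integral_finset_sum _ (fun i _ =>
    integrable_finset_sum _ fun j _ => (hfg i j).const_mul ((Aᵀ * B) i j))]
  simp_rw [integral_finset_sum _ (fun j _ => (hfg _ j).const_mul _), integral_const_mul]
  rw [← sum_eq_trace]
  rfl

/-- Trace form of the graph Cramér–Rao bound: lower bound on the expected
Dirichlet energy, E[εᵀ L ε] ≥ Tr(L U P Uᵀ). -/
theorem stmt_6 (M K : ℕ) (hM : 1 ≤ M) (hK : K ≤ M)
    (V : Matrix (Fin M) (Fin M) ℝ) (hV : Vᵀ * V = 1)
    (d : Fin M → ℝ) (hd : ∀ i, 0 ≤ d i)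
    (U : Matrix (Fin M) (Fin (M - K)) ℝ)
    (X : Type*) [MeasurableSpace X] (μ : Measure X) [IsProbabilityMeasure μ]
    (ε s : X → Fin M → ℝ) (hεmeas : Measurable ε) (hsmeas : Measurable s)
    (hε2 : ∀ i : Fin M, MemLp (fun x => ε x i) 2 μ)
    (hs2 : ∀ i : Fin M, MemLp (fun x => s x i) 2 μ)
    (W L J : Matrix (Fin M) (Fin M) ℝ)
    (hW : W = Matrix.diagonal (fun i => Real.sqrt (d i)) * Vᵀ)
    (hL : L = V * Matrix.diagonal d * Vᵀ)
    (hJ : J = Matrix.of fun i j => ∫ x, s x i * s x j ∂μ)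
    (hreg : W * (Matrix.of fun i j => ∫ x, ε x i * s x j ∂μ) * U = W * U)
    (P : Matrix (Fin (M - K)) (Fin (M - K)) ℝ)
    (hPsym : Pᵀ = P) (hP : P * (Uᵀ * J * U) * P = P) :
    ∫ x, ε x ⬝ᵥ (L *ᵥ ε x) ∂μ ≥ (L * U * P * Uᵀ).trace := by
  set C : Matrix (Fin M) (Fin M) ℝ := Matrix.of fun i j => ∫ x, ε x i * s x j ∂μ with hC
  -- L = Wᵀ * W
  have hdiag : (Matrix.diagonal fun i => Real.sqrt (d i))
      * (Matrix.diagonal fun i => Real.sqrt (d i)) = Matrix.diagonal d := by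
    rw [Matrix.diagonal_mul_diagonal]
    exact congrArg Matrix.diagonal (funext fun i => Real.mul_self_sqrt (hd i))
  have hLW : L = Wᵀ * W := by
    have h : Wᵀ * W = L := by
      rw [hW, hL]
      simp only [Matrix.transpose_mul, Matrix.transpose_transpose,
        Matrix.diagonal_transpose, Matrix.mul_assoc]
      congr 1
      rw [← Matrix.mul_assoc, hdiag]
    exact h.symm
  -- integrability of entrywise products
  have hεε : ∀ i j, Integrable (fun x => ε x i * ε x j) μ :=
    fun i j => memL2_mul_integrable (hε2 i) (hε2 j)
  have hεs : ∀ i j, Integrable (fun x => ε x i * s x j) μ :=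
    fun i j => memL2_mul_integrable (hε2 i) (hs2 j)
  have hsε : ∀ i j, Integrable (fun x => s x i * ε x j) μ :=
    fun i j => memL2_mul_integrable (hs2 i) (hε2 j)
  have hss : ∀ i j, Integrable (fun x => s x i * s x j) μ :=
    fun i j => memL2_mul_integrable (hs2 i) (hs2 j)
  -- canonical trace value
  -- (A) the target trace
  have hTc : (L * U * P * Uᵀ).trace = (P * (Uᵀ * (Wᵀ * (W * U)))).trace := by
    rw [hLW, Matrix.trace_mul_comm,
      show Uᵀ * (Wᵀ * W * U * P) = (Uᵀ * (Wᵀ * (W * U))) * P from by simp [Matrix.mul_assoc],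
      Matrix.trace_mul_comm]
  -- (B) cross term trace
  have hcross : ((Wᵀ * (W * U * P * Uᵀ))ᵀ * C).trace
      = (P * (Uᵀ * (Wᵀ * (W * U)))).trace := by
    rw [show (Wᵀ * (W * U * P * Uᵀ))ᵀ * C = U * (P * (Uᵀ * (Wᵀ * (W * C)))) from by
        simp [Matrix.transpose_mul, Matrix.mul_assoc, hPsym],
      Matrix.trace_mul_comm,
      show (P * (Uᵀ * (Wᵀ * (W * C)))) * U = P * (Uᵀ * (Wᵀ * (W * C * U))) from by
        simp [Matrix.mul_assoc],
      hreg,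
      show P * (Uᵀ * (Wᵀ * (W * U))) = P * (Uᵀ * (Wᵀ * (W * U))) from rfl]
  -- (C) quadratic term trace
  have hquad : (((W * U * P * Uᵀ)ᵀ * (W * U * P * Uᵀ))ᵀ * J).trace
      = (P * (Uᵀ * (Wᵀ * (W * U)))).trace := by
    rw [show ((W * U * P * Uᵀ)ᵀ * (W * U * P * Uᵀ))ᵀ * J
        = U * (P * (Uᵀ * (Wᵀ * (W * (U * (P * (Uᵀ * J))))))) from by
        simp [Matrix.transpose_mul, Matrix.mul_assoc, hPsym],
      Matrix.trace_mul_comm,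
      show (P * (Uᵀ * (Wᵀ * (W * (U * (P * (Uᵀ * J))))))) * U
        = P * (Uᵀ * (Wᵀ * (W * (U * (P * (Uᵀ * J * U)))))) from by simp [Matrix.mul_assoc],
      Matrix.trace_mul_comm,
      show (Uᵀ * (Wᵀ * (W * (U * (P * (Uᵀ * J * U)))))) * P
        = Uᵀ * (Wᵀ * (W * (U * (P * (Uᵀ * J * U) * P)))) from by simp [Matrix.mul_assoc],
      hP,
      show Uᵀ * (Wᵀ * (W * (U * P))) = (Uᵀ * (Wᵀ * (W * U))) * P from by
        simp [Matrix.mul_assoc],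
      Matrix.trace_mul_comm]
  -- integral computations
  have hab : ∫ x, (W *ᵥ ε x) ⬝ᵥ ((W * U * P * Uᵀ) *ᵥ s x) ∂μ = (L * U * P * Uᵀ).trace := by
    rw [int_dot _ _ _ _ hεs, ← hC, hTc]
    exact hcross
  have hba : ∫ x, ((W * U * P * Uᵀ) *ᵥ s x) ⬝ᵥ (W *ᵥ ε x) ∂μ = (L * U * P * Uᵀ).trace := by
    rw [show (∫ x, ((W * U * P * Uᵀ) *ᵥ s x) ⬝ᵥ (W *ᵥ ε x) ∂μ)
        = ∫ x, (W *ᵥ ε x) ⬝ᵥ ((W * U * P * Uᵀ) *ᵥ s x) ∂μ from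
      integral_congr_ae (Filter.Eventually.of_forall fun x => dotProduct_comm _ _)]
    exact hab
  have hbb : ∫ x, ((W * U * P * Uᵀ) *ᵥ s x) ⬝ᵥ ((W * U * P * Uᵀ) *ᵥ s x) ∂μ
      = (L * U * P * Uᵀ).trace := by
    rw [int_dot _ _ _ _ hss, ← hJ, hTc]
    exact hquad
  have haa_i := int_dot_integrable W W ε ε hεε (μ := μ)
  have hab_i := int_dot_integrable W (W * U * P * Uᵀ) ε s hεs (μ := μ)
  have hba_i := int_dot_integrable (W * U * P * Uᵀ) W s ε hsε (μ := μ)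
  have hbb_i := int_dot_integrable (W * U * P * Uᵀ) (W * U * P * Uᵀ) s s hss (μ := μ)
  have hsplit : ∫ x, ((W *ᵥ ε x) - ((W * U * P * Uᵀ) *ᵥ s x))
        ⬝ᵥ ((W *ᵥ ε x) - ((W * U * P * Uᵀ) *ᵥ s x)) ∂μ
      = (∫ x, (W *ᵥ ε x) ⬝ᵥ (W *ᵥ ε x) ∂μ) - (L * U * P * Uᵀ).trace := by
    simp_rw [sub_dotProduct, dotProduct_sub]
    have h1 : Integrable (fun x => (W *ᵥ ε x) ⬝ᵥ (W *ᵥ ε x)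
        - (W *ᵥ ε x) ⬝ᵥ ((W * U * P * Uᵀ) *ᵥ s x)) μ := haa_i.sub hab_i
    have h2 : Integrable (fun x => ((W * U * P * Uᵀ) *ᵥ s x) ⬝ᵥ (W *ᵥ ε x)
        - ((W * U * P * Uᵀ) *ᵥ s x) ⬝ᵥ ((W * U * P * Uᵀ) *ᵥ s x)) μ := hba_i.sub hbb_i
    rw [integral_sub h1 h2, integral_sub haa_i hab_i,
      integral_sub hba_i hbb_i, hab, hba, hbb]
    ring
  have hgoal_eq : ∫ x, ε x ⬝ᵥ (L *ᵥ ε x) ∂μ = ∫ x, (W *ᵥ ε x) ⬝ᵥ (W *ᵥ ε x) ∂μ := by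
    refine integral_congr_ae (Filter.Eventually.of_forall fun x => ?_)
    show ε x ⬝ᵥ (L *ᵥ ε x) = (W *ᵥ ε x) ⬝ᵥ (W *ᵥ ε x)
    rw [hLW]
    rw [← Matrix.mulVec_mulVec, Matrix.dotProduct_mulVec, Matrix.vecMul_transpose]
  have h0 : 0 ≤ ∫ x, ((W *ᵥ ε x) - ((W * U * P * Uᵀ) *ᵥ s x))
        ⬝ᵥ ((W *ᵥ ε x) - ((W * U * P * Uᵀ) *ᵥ s x)) ∂μ :=
    integral_nonneg fun x => dotProduct_self_nonneg' _
  have h1 := h0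
  rw [hsplit] at h1
  rw [ge_iff_le, ← sub_nonneg, hgoal_eq]
  exact h1
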